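/- Let ρ : ℂ → ℝ be smooth (infinitely real-differentiable, viewing ℂ ≅ ℝ²), let z₀ ∈ ℂ with ρ₀ := ρ(z₀) > 0, and let χ̃ : ℝ → ℝ be smooth with 0 ≤ χ̃ ≤ 1, χ̃(t) = 1 for t ≤ 1 and χ̃(t) = 0 for t ≥ 3/2. Then lim_{k→∞} (4k²/ρ₀) ∫_ℂ (ρ₀ − ρ(z₀ + x²))·χ̃(k^{1/4}|x|)·(conj(x)/x)·e^{−2k|x|²} dA(x) = −π·∂_zρ(z₀)/ρ₀, where dA is Lebesgue measure on ℂ ≅ ℝ² and ∂_zρ(z₀) = (1/2)(Dρ(z₀)(1) − i·Dρ(z₀)(i)) is the Wirtinger derivative. -/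

import Mathlib

open Complex Filter MeasureTheory

/-- The Wirtinger derivative `∂_z F(w) = (1/2)(DF(w)(1) − i·DF(w)(i))`,
where `DF(w)` is the real Fréchet derivative of `F` at `w`. -/
noncomputable def wirtingerDz (F : ℂ → ℂ) (w : ℂ) : ℂ :=
  (1 / 2) * (fderiv ℝ F w 1 - Complex.I * fderiv ℝ F w Complex.I)

private noncomputable def hfun (L1 L2 : ℝ) (θ : ℝ) : ℂ :=
  ((L1 * Real.cos (2*θ) + L2 * Real.sin (2*θ) : ℝ) : ℂ) * Complex.exp (-(2*θ)*I)


private lemma gauss_r : ∫ r in Set.Ioi (0:ℝ), r^3 * Real.exp (-2*r^2) = 1/8 := by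
  have hderiv : ∀ x ∈ Set.Ioi (0:ℝ), HasDerivAt (fun r : ℝ => -(1/8) * Real.exp (-2*r^2) * (2*r^2+1))
      (x^3 * Real.exp (-2*x^2)) x := by
    intro x _
    have h1 : HasDerivAt (fun r : ℝ => -2*r^2) (-2*(2*x)) x := by
      simpa using ((hasDerivAt_pow 2 x).const_mul (-2:ℝ))
    have h2 := h1.exp
    have h3 : HasDerivAt (fun r : ℝ => 2*r^2+1) (2*(2*x)) x := by
      simpa using (((hasDerivAt_pow 2 x).const_mul (2:ℝ)).add_const 1)
    have h4 := (h2.const_mul (-(1/8) : ℝ)).mul h3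
    exact h4.congr_deriv (by ring)
  have hint : IntegrableOn (fun x : ℝ => x^3 * Real.exp (-2*x^2)) (Set.Ioi 0) := by
    have := integrableOn_rpow_mul_exp_neg_mul_sq (b := 2) (by norm_num) (s := 3) (by norm_num)
    refine this.congr_fun (fun x hx => ?_) measurableSet_Ioi
    simp only [show (3:ℝ) = ((3:ℕ):ℝ) by norm_num, Real.rpow_natCast]
  have htend : Tendsto (fun r : ℝ => -(1/8) * Real.exp (-2*r^2) * (2*r^2+1)) atTop (nhds 0) := by
    have h0 : Tendsto (fun u : ℝ => -(1/8) * ((u+1) * Real.exp (-u))) atTop (nhds 0) := by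
      have ha : Tendsto (fun u : ℝ => u * Real.exp (-u)) atTop (nhds 0) := by
        simpa using Real.tendsto_pow_mul_exp_neg_atTop_nhds_zero 1
      have hb : Tendsto (fun u : ℝ => Real.exp (-u)) atTop (nhds 0) :=
        Real.tendsto_exp_neg_atTop_nhds_zero
      have := (ha.add hb).const_mul (-(1/8):ℝ)
      simpa [mul_add, add_mul, mul_comm, mul_assoc, mul_left_comm] using this
    have hcomp : Tendsto (fun r : ℝ => 2*r^2) atTop atTop := by
      exact (tendsto_pow_atTop (by norm_num : 2 ≠ 0)).const_mul_atTop (by norm_num)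
    have := h0.comp hcomp
    refine this.congr (fun r => ?_)
    simp only [Function.comp]
    ring_nf
  have := MeasureTheory.integral_Ioi_of_hasDerivAt_of_tendsto
    ((by fun_prop : Continuous (fun r : ℝ => -(1/8) * Real.exp (-2*r^2) * (2*r^2+1))).continuousWithinAt : ContinuousWithinAt (fun r : ℝ => -(1/8) * Real.exp (-2*r^2) * (2*r^2+1)) (Set.Ici 0) 0)
    hderiv hint htend
  rw [this]
  norm_num


private lemma hfun_eq (L1 L2 : ℝ) (θ : ℝ) :
    hfun L1 L2 θ = ((L1:ℂ) - I*L2)/2 + ((L1:ℂ) + I*L2)/2 * Complex.exp ((-4*I)*θ) := by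
  have hE : Complex.exp (-(2*(θ:ℂ))*I) = ((Real.cos (2*θ) : ℝ):ℂ) - ((Real.sin (2*θ):ℝ):ℂ)*I := by
    have := Complex.exp_mul_I (x := (-(2*(θ:ℂ))))
    rw [this, show (-(2*(θ:ℂ))) = ((-(2*θ):ℝ):ℂ) by push_cast; ring, ← Complex.ofReal_cos,
      ← Complex.ofReal_sin, Real.cos_neg, Real.sin_neg]
    push_cast
    ring
  have hE4 : Complex.exp ((-4*I)*θ) = (Complex.exp (-(2*(θ:ℂ))*I))^2 := by
    rw [← Complex.exp_nat_mul]
    congr 1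
    push_cast
    ring
  have hab : ((Real.cos (2*θ):ℝ):ℂ)^2 + ((Real.sin (2*θ):ℝ):ℂ)^2 = 1 := by
    norm_cast
    exact Real.cos_sq_add_sin_sq (2*θ)
  rw [hfun, hE4, hE, Complex.ofReal_add,
    Complex.ofReal_mul, Complex.ofReal_mul]
  set a := ((Real.cos (2*θ):ℝ):ℂ)
  set b := ((Real.sin (2*θ):ℝ):ℂ)
  linear_combination ((L1:ℂ) - I*(L2:ℂ))/2 * hab +
    (-(L1:ℂ)*b^2/2 + (L2:ℂ)*a*b - I/2*(L2:ℂ)*b^2) * Complex.I_sq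


private lemma theta_int (L1 L2 : ℝ) :
    ∫ θ in Set.Ioo (-Real.pi) Real.pi, hfun L1 L2 θ
      = Real.pi * ((L1:ℂ) - I*L2) := by
  rw [← MeasureTheory.integral_Ioc_eq_integral_Ioo,
    ← intervalIntegral.integral_of_le (by linarith [Real.pi_pos])]
  have h1 : ∀ θ ∈ Set.uIcc (-Real.pi) Real.pi, hfun L1 L2 θ
      = ((L1:ℂ) - I*L2)/2 + ((L1:ℂ) + I*L2)/2 * Complex.exp ((-4*I)*θ) :=
    fun θ _ => hfun_eq L1 L2 θ
  rw [intervalIntegral.integral_congr h1]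
  have hc : (-4*I : ℂ) ≠ 0 := by simp [Complex.ext_iff]
  have hexp : Continuous (fun θ : ℝ => ((L1:ℂ) + I*L2)/2 * Complex.exp ((-4*I)*θ)) := by
    fun_prop
  rw [intervalIntegral.integral_add (intervalIntegrable_const)
    (hexp.intervalIntegrable _ _)]
  rw [intervalIntegral.integral_const_mul, integral_exp_mul_complex hc]
  have e1 : Complex.exp ((-4*I) * (Real.pi:ℂ)) = 1 := by
    have := Complex.exp_int_mul_two_pi_mul_I (-2)
    rw [← this]
    congr 1
    push_cast
    ring
  have e2 : Complex.exp ((-4*I) * (-(Real.pi:ℂ))) = 1 := by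
    have := Complex.exp_int_mul_two_pi_mul_I (2)
    rw [← this]
    congr 1
    push_cast
    ring
  rw [intervalIntegral.integral_const, Complex.real_smul]
  push_cast
  rw [e1, e2]
  ring


private lemma polar_eval (L1 L2 : ℝ) :
    ∫ y : ℂ, ((L1 * (y^2).re + L2 * (y^2).im : ℝ) : ℂ) * ((starRingEnd ℂ) y / y)
        * ((Real.exp (-2 * ‖y‖ ^ 2) : ℝ) : ℂ)
      = (Real.pi/8 : ℂ) * ((L1:ℂ) - I * L2) := by
  rw [← Complex.integral_comp_polarCoord_symm]
  have htarget : polarCoord.target = Set.Ioi (0:ℝ) ×ˢ Set.Ioo (-Real.pi) Real.pi := rfl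
  rw [htarget]
  rw [setIntegral_congr_fun (measurableSet_Ioi.prod measurableSet_Ioo)
    (g := fun p : ℝ × ℝ => ((p.1^3 * Real.exp (-2*p.1^2) : ℝ) : ℂ) * hfun L1 L2 p.2) ?_]
  · rw [Measure.volume_eq_prod,
      setIntegral_prod_mul (f := fun r : ℝ => ((r^3*Real.exp (-2*r^2):ℝ):ℂ)) (g := hfun L1 L2),
      theta_int]
    have hr8 : (∫ x in Set.Ioi (0:ℝ), ((x^3*Real.exp (-2*x^2) : ℝ):ℂ)) = ((1/8 : ℝ) : ℂ) := by
      rw [← gauss_r]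
      exact integral_ofReal
    rw [hr8]
    push_cast
    ring
  · rintro ⟨r, θ⟩ ⟨hr, hθ⟩
    simp only [Set.mem_Ioi] at hr
    have hy : Complex.polarCoord.symm (r, θ) = (r:ℂ) * Complex.exp ((θ:ℂ)*I) := by
      rw [Complex.polarCoord_symm_apply, Complex.exp_mul_I, ← Complex.ofReal_cos,
        ← Complex.ofReal_sin]
    have hconj : (starRingEnd ℂ) ((r:ℂ) * Complex.exp ((θ:ℂ)*I))
        = (r:ℂ) * Complex.exp (-(θ:ℂ)*I) := by
      rw [map_mul, Complex.conj_ofReal, ← Complex.exp_conj]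
      congr 2
      simp [Complex.ext_iff]
    have hr0 : (r:ℂ) ≠ 0 := by exact_mod_cast hr.ne'
    have hdiv : (starRingEnd ℂ) ((r:ℂ) * Complex.exp ((θ:ℂ)*I)) / ((r:ℂ) * Complex.exp ((θ:ℂ)*I))
        = Complex.exp (-(2*θ)*I) := by
      rw [hconj, mul_div_mul_left _ _ hr0, ← Complex.exp_sub]
      congr 1
      push_cast
      ring
    have habs : ‖Complex.polarCoord.symm (r, θ)‖ = r := by
      rw [Complex.norm_polarCoord_symm, abs_of_pos hr]
    have hsq : ((r:ℂ) * Complex.exp ((θ:ℂ)*I))^2 = ((r^2 : ℝ):ℂ) * Complex.exp (((2*θ:ℝ):ℂ)*I) := by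
      rw [mul_pow, ← Complex.exp_nat_mul]
      push_cast
      ring_nf
    have h2 : ((r:ℂ) * Complex.exp ((θ:ℂ)*I))^2
        = ((r^2*Real.cos (2*θ) : ℝ):ℂ) + ((r^2*Real.sin (2*θ):ℝ):ℂ) * I := by
      rw [hsq, Complex.exp_mul_I, ← Complex.ofReal_cos, ← Complex.ofReal_sin]
      push_cast
      ring
    have hre : ((((r:ℂ) * Complex.exp ((θ:ℂ)*I))^2).re) = r^2 * Real.cos (2*θ) := by
      rw [h2]
      simp only [Complex.add_re, Complex.ofReal_re, Complex.mul_re, Complex.I_re, Complex.I_im,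
        Complex.ofReal_im]
      ring
    have him : ((((r:ℂ) * Complex.exp ((θ:ℂ)*I))^2).im) = r^2 * Real.sin (2*θ) := by
      rw [h2]
      simp only [Complex.add_im, Complex.ofReal_im, Complex.mul_im, Complex.I_re, Complex.I_im,
        Complex.ofReal_re]
      ring
    simp only
    rw [habs, hy, hdiv, hre, him, hfun, Complex.real_smul]
    push_cast
    ring


set_option maxHeartbeats 2000000 in
/-- For `ρ : ℂ → ℝ` smooth with `ρ₀ := ρ(z₀) > 0` and a cutoff `χ̃`,
`lim_{k→∞} (4k²/ρ₀) ∫_ℂ (ρ₀ − ρ(z₀+x²))·χ̃(k^{1/4}|x|)·(x̄/x)·e^{−2k|x|²} dA(x)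
  = −π·∂_zρ(z₀)/ρ₀`. -/
theorem core_limit_binfty (ρ : ℂ → ℝ) (hρ : ContDiff ℝ (⊤ : ℕ∞) ρ) (z₀ : ℂ) (hpos : 0 < ρ z₀)
    (χ : ℝ → ℝ) (hχ : ContDiff ℝ (⊤ : ℕ∞) χ) (hχ01 : ∀ t : ℝ, 0 ≤ χ t ∧ χ t ≤ 1)
    (hχ1 : ∀ t : ℝ, t ≤ 1 → χ t = 1) (hχ0 : ∀ t : ℝ, 3 / 2 ≤ t → χ t = 0) :
    Tendsto (fun k : ℝ =>
        (((4 * k ^ 2 / ρ z₀ : ℝ)) : ℂ) *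
          ∫ x : ℂ, (((ρ z₀ - ρ (z₀ + x ^ 2) : ℝ)) : ℂ)
            * ((χ (k ^ ((1 : ℝ) / 4) * ‖x‖) : ℝ) : ℂ)
            * ((starRingEnd ℂ) x / x)
            * Complex.exp (-2 * (k : ℂ) * ((‖x‖ : ℝ) : ℂ) ^ 2))
      atTop
      (nhds (-(Real.pi : ℂ) * wirtingerDz (fun w => ((ρ w : ℝ) : ℂ)) z₀ / ((ρ z₀ : ℝ) : ℂ))) := by
  have hc0 : (ρ z₀ : ℝ) ≠ 0 := ne_of_gt hpos
  set c₀ : ℝ := ρ z₀ with hc₀def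
  set L : ℂ →L[ℝ] ℝ := fderiv ℝ ρ z₀ with hLdef
  have hfd : HasFDerivAt ρ L z₀ := (hρ.differentiable (by simp) z₀).hasFDerivAt
  set L1 : ℝ := L 1 with hL1def
  set L2 : ℝ := L Complex.I with hL2def
  -- Wirtinger derivative of the complexified function
  have hwirt : wirtingerDz (fun w => ((ρ w : ℝ) : ℂ)) z₀
      = (1/2 : ℂ) * ((L1 : ℂ) - Complex.I * (L2 : ℂ)) := by
    have h1 : HasFDerivAt (fun w => ((ρ w : ℝ):ℂ)) (Complex.ofRealCLM.comp L) z₀ :=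
      (Complex.ofRealCLM.hasFDerivAt).comp z₀ hfd
    rw [wirtingerDz, h1.fderiv]
    simp [ContinuousLinearMap.comp_apply]
    rfl
  -- L as combination
  have hGL : ∀ v : ℂ, L v = v.re * L1 + v.im * L2 := by
    intro v
    conv_lhs => rw [show v = (v.re : ℝ) • (1:ℂ) + (v.im : ℝ) • Complex.I by
      simp [Complex.real_smul, Complex.re_add_im]]
    rw [map_add, L.map_smul, L.map_smul]
    simp [smul_eq_mul]
    rfl
  -- rescaled integrand and its limit
  set F : ℝ → ℂ → ℂ := fun k y =>
    ((k * (c₀ - ρ (z₀ + (k⁻¹ : ℝ) • y ^ 2)) : ℝ) : ℂ)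
      * ((χ (k ^ (-(1/4) : ℝ) * ‖y‖) : ℝ) : ℂ)
      * ((starRingEnd ℂ) y / y) * ((Real.exp (-2 * ‖y‖ ^ 2) : ℝ) : ℂ) with hFdef
  set G : ℂ → ℂ := fun y =>
    ((-L1 * (y^2).re + -L2 * (y^2).im : ℝ) : ℂ)
      * ((starRingEnd ℂ) y / y) * ((Real.exp (-2 * ‖y‖ ^ 2) : ℝ) : ℂ) with hGdef
  -- the bound
  obtain ⟨C, hC0, hlip⟩ : ∃ C : ℝ, 0 ≤ C ∧ ∀ w : ℂ, ‖w‖ ≤ 3 →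
      |ρ (z₀ + w) - c₀| ≤ C * ‖w‖ := by
    obtain ⟨C, hC⟩ := (isCompact_closedBall z₀ 3).exists_bound_of_continuousOn
      ((hρ.continuous_fderiv (by simp)).continuousOn (s := Metric.closedBall z₀ 3))
    refine ⟨C, le_trans (norm_nonneg _) (hC z₀ (by simp)), fun w hw => ?_⟩
    have hmem : z₀ + w ∈ Metric.closedBall z₀ 3 := by
      simp [Metric.mem_closedBall, dist_eq_norm, hw]
    have := (convex_closedBall z₀ 3).norm_image_sub_le_of_norm_fderiv_le
      (f := ρ) (C := C) (fun x _ => (hρ.differentiable (by simp)).differentiableAt)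
      hC (Metric.mem_closedBall_self (by norm_num)) hmem
    simpa [Real.norm_eq_abs] using this
  -- dominated convergence
  have hDCT : Tendsto (fun k : ℝ => ∫ y : ℂ, F k y) atTop (nhds (∫ y : ℂ, G y)) := by
    apply MeasureTheory.tendsto_integral_filter_of_dominated_convergence
      (bound := fun y : ℂ => C * Real.exp (-(‖y‖)^2))
    · -- measurability
      refine Eventually.of_forall (fun k => ?_)
      have hcρ : Continuous ρ := hρ.continuous
      have hcχ : Continuous χ := hχ.continuous
      have m1 : Measurable fun y : ℂ => ((k * (c₀ - ρ (z₀ + (k⁻¹ : ℝ) • y ^ 2)) : ℝ) : ℂ) := by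
        fun_prop
      have m2 : Measurable fun y : ℂ => ((χ (k ^ (-(1/4) : ℝ) * ‖y‖) : ℝ) : ℂ) :=
        (Complex.continuous_ofReal.comp (hcχ.comp
          (continuous_const.mul continuous_norm))).measurable
      have m3 : Measurable fun y : ℂ => (starRingEnd ℂ) y / y :=
        (Complex.continuous_conj.measurable).div measurable_id
      have m4 : Measurable fun y : ℂ => ((Real.exp (-2 * ‖y‖ ^ 2) : ℝ) : ℂ) :=
        (Complex.continuous_ofReal.comp (Real.continuous_exp.comp
          (continuous_const.mul (continuous_norm.pow 2)))).measurable
      exact (((m1.mul m2).mul m3).mul m4).aestronglyMeasurable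
    · -- bound
      filter_upwards [eventually_ge_atTop (1:ℝ)] with k hk
      refine Eventually.of_forall (fun y => ?_)
      have k0 : (0:ℝ) < k := lt_of_lt_of_le one_pos hk
      simp only [hFdef]
      rw [norm_mul, norm_mul, norm_mul, Complex.norm_real, Complex.norm_real, Complex.norm_real,
        Real.norm_eq_abs, Real.norm_eq_abs, Real.norm_eq_abs]
      by_cases hcase : (3/2 : ℝ) ≤ k ^ (-(1/4) : ℝ) * ‖y‖
      · rw [hχ0 _ hcase]
        simp only [abs_zero, mul_zero, zero_mul]
        positivity
      · push_neg at hcase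
        have hs0 : (0:ℝ) ≤ ‖y‖ ^ 2 := by positivity
        set s : ℝ := ‖y‖ ^ 2 with hs
        have habs : ‖(k⁻¹ : ℝ) • y ^ 2‖ = k⁻¹ * s := by
          rw [Complex.real_smul, norm_mul, Complex.norm_real, Real.norm_eq_abs,
            _root_.abs_of_nonneg (inv_nonneg.2 k0.le), norm_pow]
        have e1 : (k ^ (-(1/4):ℝ))^2 = k ^ (-(1/2):ℝ) := by
          rw [← Real.rpow_natCast (k ^ (-(1/4):ℝ)) 2, ← Real.rpow_mul k0.le]
          norm_num
        have hks : k⁻¹ * s ≤ 3 := by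
          have h0 : 0 ≤ k ^ (-(1/4):ℝ) * ‖y‖ := by positivity
          have h2 : (k ^ (-(1/4):ℝ) * ‖y‖)^2 < (3/2)^2 := by nlinarith
          rw [mul_pow, e1] at h2
          have e2 : (k:ℝ)⁻¹ = k ^ (-(1/2):ℝ) * k ^ (-(1/2):ℝ) := by
            rw [← Real.rpow_add k0]
            rw [show (-(1/2):ℝ) + (-(1/2)) = -1 by norm_num, Real.rpow_neg_one]
          have h4 : k ^ (-(1/2):ℝ) ≤ 1 :=
            Real.rpow_le_one_of_one_le_of_nonpos hk (by norm_num)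
          have h5 : (0:ℝ) < k ^ (-(1/2):ℝ) := Real.rpow_pos_of_pos k0 _
          calc k⁻¹ * s = k ^ (-(1/2):ℝ) * (k ^ (-(1/2):ℝ) * s) := by rw [e2]; ring
          _ ≤ 1 * (9/4) := by
              apply mul_le_mul h4 (by nlinarith) (by positivity) (by norm_num)
          _ ≤ 3 := by norm_num
        have h1 : |k * (c₀ - ρ (z₀ + (k⁻¹:ℝ) • y^2))| ≤ C * s := by
          rw [abs_mul, abs_of_pos k0, abs_sub_comm]
          have hl := hlip ((k⁻¹:ℝ) • y^2) (by rw [habs]; exact hks)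
          rw [habs] at hl
          calc k * |ρ (z₀ + (k⁻¹:ℝ) • y^2) - c₀| ≤ k * (C * (k⁻¹ * s)) :=
            mul_le_mul_of_nonneg_left hl k0.le
          _ = C * s := by field_simp
        have h2 : |χ (k ^ (-(1/4):ℝ) * ‖y‖)| ≤ 1 :=
          abs_le.2 ⟨by linarith [(hχ01 (k ^ (-(1/4):ℝ) * ‖y‖)).1],
            (hχ01 (k ^ (-(1/4):ℝ) * ‖y‖)).2⟩
        have h3 : ‖(starRingEnd ℂ) y / y‖ ≤ 1 := by
          by_cases hy : y = 0
          · simp [hy]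
          · rw [norm_div, RCLike.norm_conj, div_self (norm_ne_zero_iff.2 hy)]
        have key : s * Real.exp (-2*s) ≤ Real.exp (-s) := by
          have h5 : s ≤ Real.exp s := le_trans (by linarith) (Real.add_one_le_exp s)
          have h6 : Real.exp (-2*s) = Real.exp (-s) * Real.exp (-s) := by
            rw [← Real.exp_add]; ring_nf
          have h7 : s * Real.exp (-s) ≤ 1 := by
            rw [Real.exp_neg, ← div_eq_mul_inv]
            exact div_le_one_of_le₀ h5 (Real.exp_nonneg s)
          calc s * Real.exp (-2*s) = (s*Real.exp (-s)) * Real.exp (-s) := by rw [h6]; ring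
          _ ≤ 1 * Real.exp (-s) := mul_le_mul_of_nonneg_right h7 (Real.exp_nonneg _)
          _ = Real.exp (-s) := one_mul _
        calc |k * (c₀ - ρ (z₀ + (k⁻¹:ℝ) • y^2))| * |χ (k ^ (-(1/4):ℝ) * ‖y‖)|
              * ‖(starRingEnd ℂ) y / y‖ * |Real.exp (-2 * s)|
            ≤ (C * s) * 1 * 1 * Real.exp (-2*s) := by
              rw [abs_of_pos (Real.exp_pos _)]
              gcongr
          _ = C * (s * Real.exp (-2*s)) := by ring
          _ ≤ C * Real.exp (-s) := mul_le_mul_of_nonneg_left key hC0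
    · -- integrable bound
      have h1 : Integrable (fun v : ℂ =>
          Complex.exp ((-1 : ℂ) * ‖v‖^2 + 0 * (inner ℝ (0:ℂ) v : ℝ))) :=
        GaussianFourier.integrable_cexp_neg_mul_sq_norm_add (by norm_num) 0 0
      have h2 : Integrable (fun v : ℂ => Real.exp (-(‖v‖)^2)) := by
        refine h1.norm.congr (Filter.EventuallyEq.of_eq (funext fun v => ?_))
        simp [Complex.norm_exp, ← Complex.ofReal_pow]
      exact h2.const_mul C
    · -- pointwise limit
      refine Eventually.of_forall (fun y => ?_)
      have hA : Tendsto (fun k : ℝ => k • (ρ (z₀ + (k:ℝ)⁻¹ • y^2) - ρ z₀)) atTop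
          (nhds (L (y^2))) :=
        hfd.lim (y^2) (by simpa [Real.norm_eq_abs] using tendsto_abs_atTop_atTop)
      have hA2 : Tendsto (fun k : ℝ => ((k * (c₀ - ρ (z₀ + (k⁻¹:ℝ) • y^2)) : ℝ) : ℂ)) atTop
          (nhds ((-(L (y^2)) : ℝ) : ℂ)) := by
        apply (Complex.continuous_ofReal.tendsto _).comp
        refine hA.neg.congr (fun k => ?_)
        simp only [smul_eq_mul]
        ring
      have hA3 := (hA2.mul_const ((starRingEnd ℂ) y / y)).mul_const
        (((Real.exp (-2 * ‖y‖ ^ 2) : ℝ) : ℂ))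
      have hGy : ((-(L (y^2)) : ℝ) : ℂ) * ((starRingEnd ℂ) y / y)
          * (((Real.exp (-2 * ‖y‖ ^ 2) : ℝ) : ℂ)) = G y := by
        rw [hGdef]
        simp only
        congr 2
        rw [hGL (y^2)]
        push_cast
        ring
      rw [hGy] at hA3
      have hsmall : Tendsto (fun k : ℝ => k ^ (-(1/4):ℝ) * ‖y‖) atTop (nhds 0) := by
        simpa using (tendsto_rpow_neg_atTop (by norm_num : (0:ℝ) < 1/4)).mul_const
          (‖y‖)
      have hev : ∀ᶠ k in atTop, F k y
          = ((k * (c₀ - ρ (z₀ + (k⁻¹:ℝ) • y^2)) : ℝ) : ℂ) * ((starRingEnd ℂ) y / y)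
            * (((Real.exp (-2 * ‖y‖ ^ 2) : ℝ) : ℂ)) := by
        filter_upwards [hsmall.eventually_lt_const (by norm_num : (0:ℝ) < 1)] with k hk
        simp only [hFdef]
        rw [hχ1 _ hk.le]
        push_cast
        ring
      have hev' : (fun k : ℝ => F k y) =ᶠ[atTop]
          (fun k : ℝ => ((k * (c₀ - ρ (z₀ + (k⁻¹:ℝ) • y^2)) : ℝ) : ℂ) * ((starRingEnd ℂ) y / y)
            * (((Real.exp (-2 * ‖y‖ ^ 2) : ℝ) : ℂ))) := hev
      exact Filter.Tendsto.congr' hev'.symm hA3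
  -- value of ∫ G
  have hGval : ∫ y : ℂ, G y = (Real.pi/8 : ℂ) * (((-L1 : ℝ):ℂ) - Complex.I * ((-L2 : ℝ):ℂ)) :=
    polar_eval (-L1) (-L2)
  -- final limit value
  have htarget : ((4 / c₀ : ℝ) : ℂ) * ∫ y : ℂ, G y
      = -(Real.pi : ℂ) * wirtingerDz (fun w => ((ρ w : ℝ) : ℂ)) z₀ / ((ρ z₀ : ℝ) : ℂ) := by
    rw [hGval, hwirt, ← hc₀def]
    push_cast
    field_simp
    ring
  have hmain : Tendsto (fun k : ℝ => ((4 / c₀ : ℝ) : ℂ) * ∫ y : ℂ, F k y) atTop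
      (nhds (-(Real.pi : ℂ) * wirtingerDz (fun w => ((ρ w : ℝ) : ℂ)) z₀ / ((ρ z₀ : ℝ) : ℂ))) := by
    rw [← htarget]
    exact hDCT.const_mul _
  -- change of variables: eventual equality
  refine Tendsto.congr' ?_ hmain
  filter_upwards [eventually_ge_atTop (1:ℝ)] with k hk
  have k0 : (0:ℝ) < k := lt_of_lt_of_le one_pos hk
  have hk0c : (k:ℂ) ≠ 0 := by exact_mod_cast k0.ne'
  have hc0c : (c₀:ℂ) ≠ 0 := by exact_mod_cast hc0
  set R : ℝ := (Real.sqrt k)⁻¹ with hRdef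
  have hRpos : 0 < R := inv_pos.2 (Real.sqrt_pos.2 k0)
  have hR2 : R^2 = k⁻¹ := by rw [hRdef, inv_pow, Real.sq_sqrt k0.le]
  have hkR2 : k * R^2 = 1 := by rw [hR2]; field_simp
  set ORIG : ℂ → ℂ := fun x => ((c₀ - ρ (z₀ + x ^ 2) : ℝ) : ℂ)
      * ((χ (k ^ ((1 : ℝ) / 4) * ‖x‖) : ℝ) : ℂ)
      * ((starRingEnd ℂ) x / x)
      * Complex.exp (-2 * (k : ℂ) * ((‖x‖ : ℝ) : ℂ) ^ 2) with hORIG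
  have hcv := MeasureTheory.Measure.integral_comp_smul (volume : Measure ℂ) ORIG R
  rw [Complex.finrank_real_complex] at hcv
  have hRk : |((R^2 : ℝ))⁻¹| = k := by rw [hR2, inv_inv, _root_.abs_of_pos k0]
  rw [hRk] at hcv
  have hpt : (fun y : ℂ => ORIG (R • y)) = fun y => (k⁻¹ : ℝ) • F k y := by
    funext y
    simp only [hORIG, hFdef]
    have hRy : (R • y : ℂ) = (R:ℂ) * y := Complex.real_smul
    have hRne : (R:ℂ) ≠ 0 := by exact_mod_cast hRpos.ne'
    have hx2 : (R • y : ℂ)^2 = (k⁻¹ : ℝ) • y^2 := by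
      rw [hRy, Complex.real_smul, mul_pow, ← Complex.ofReal_pow, hR2]
    have habsx : ‖R • y‖ = R * ‖y‖ := by
      rw [hRy, norm_mul, Complex.norm_real, Real.norm_eq_abs, _root_.abs_of_pos hRpos]
    have hχarg : k ^ ((1:ℝ)/4) * (R * ‖y‖) = k ^ (-(1/4) : ℝ) * ‖y‖ := by
      rw [hRdef, Real.sqrt_eq_rpow, ← Real.rpow_neg k0.le, ← mul_assoc, ← Real.rpow_add k0]
      norm_num
    have hdivx : (starRingEnd ℂ) (R • y) / (R • y) = (starRingEnd ℂ) y / y := by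
      rw [hRy, map_mul, Complex.conj_ofReal, mul_div_mul_left _ _ hRne]
    have hexp : Complex.exp (-2 * (k:ℂ) * ((R * ‖y‖ : ℝ):ℂ)^2)
        = ((Real.exp (-2 * ‖y‖^2) : ℝ) : ℂ) := by
      rw [Complex.ofReal_exp]
      congr 1
      have hone : ((k * R^2 : ℝ) : ℂ) = 1 := by rw [hkR2]; norm_num
      push_cast at hone ⊢
      linear_combination (-2 * (‖y‖:ℂ)^2) * hone
    rw [hx2, habsx, hχarg, hdivx, hexp]
    simp only [Complex.real_smul]
    have hcanc : ((k⁻¹ : ℝ) : ℂ) * ((k * (c₀ - ρ (z₀ + ((k⁻¹:ℝ):ℂ) * y^2)) : ℝ) : ℂ)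
        = (((c₀ - ρ (z₀ + ((k⁻¹:ℝ):ℂ) * y^2)) : ℝ) : ℂ) := by
      rw [Complex.ofReal_inv, Complex.ofReal_mul, ← mul_assoc,
        inv_mul_cancel₀ hk0c, one_mul]
    linear_combination (-(((χ (k ^ (-(1/4):ℝ) * ‖y‖) : ℝ) : ℂ)
      * ((starRingEnd ℂ) y / y) * ((Real.exp (-2 * ‖y‖ ^ 2) : ℝ) : ℂ))) * hcanc
  rw [hpt, integral_smul] at hcv
  have hIeq : ∫ x : ℂ, ORIG x = (k⁻¹ : ℝ) • ((k⁻¹ : ℝ) • ∫ y : ℂ, F k y) := by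
    rw [hcv, smul_smul, inv_mul_cancel₀ k0.ne', one_smul]
  rw [hIeq, Complex.real_smul, Complex.real_smul]
  push_cast
  field_simp
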